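/- Define c_i := D(i,1)·U(1,i) = (g_i g_{i−1} ⋯ g_1)(g_1 g_2 ⋯ g_i) for 1 ≤ i ≤ N. Then c_i c_j = c_j c_i for all 1 ≤ i, j ≤ N. -/

import Mathlib

/-- The descending product `g_a g_{a−1} ⋯ g_c` (for `a ≥ c`). -/
def braidDesc {M : Type*} [Monoid M] (g : ℕ → M) (a c : ℕ) : M :=
  ((List.range (a + 1 - c)).map fun k => g (a - k)).prod

/-- The ascending product `g_c g_{c+1} ⋯ g_a` (for `a ≥ c`). -/
def braidAsc {M : Type*} [Monoid M] (g : ℕ → M) (c a : ℕ) : M :=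
  ((List.range (a + 1 - c)).map fun k => g (c + k)).prod

/-- The element `c_i := D(i,1)·U(1,i) = (g_i ⋯ g_1)(g_1 ⋯ g_i)`. -/
def braidC {M : Type*} [Monoid M] (g : ℕ → M) (i : ℕ) : M :=
  braidDesc g i 1 * braidAsc g 1 i

/-! For `1 ≤ k < j ≤ N` the braid relations let `g k` pass through `D(j,1)` as `g (k+1)`,
and `g (k+1)` pass back through `U(1,j)` as `g k`; hence `g k` commutes with `c_j`.
For `i < j`, `c_i` is a product of such generators `g k` with `k ≤ i`. -/

open MulOpposite

section Products

variable {M : Type*} [Monoid M] {g : ℕ → M}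

lemma braidDesc_succ {a c : ℕ} (h : c ≤ a + 1) :
    braidDesc g (a + 1) c = g (a + 1) * braidDesc g a c := by
  rw [braidDesc, show a + 1 + 1 - c = (a + 1 - c) + 1 by omega, List.range_succ_eq_map]
  simp [braidDesc, Function.comp_def]

lemma braidAsc_succ {a c : ℕ} (h : c ≤ a + 1) :
    braidAsc g c (a + 1) = braidAsc g c a * g (a + 1) := by
  rw [braidAsc, show a + 1 + 1 - c = (a + 1 - c) + 1 by omega, List.range_succ]
  simp [braidAsc, show c + (a + 1 - c) = a + 1 by omega]

lemma op_braidAsc_one (a : ℕ) : op (braidAsc g 1 a) = braidDesc (op ∘ g) a 1 := by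
  induction a with
  | zero => simp [braidAsc, braidDesc]
  | succ a ih => rw [braidAsc_succ le_add_self, braidDesc_succ le_add_self, op_mul, ih]; rfl

lemma braidDesc_commute {a c : ℕ} {x : M} (h : ∀ k, c ≤ k → k ≤ a → Commute (g k) x) :
    Commute (braidDesc g a c) x :=
  Commute.list_prod_left _ _ <| by
    simp only [List.mem_map, List.mem_range]
    rintro _ ⟨m, hm, rfl⟩
    exact h _ (by omega) (by omega)

lemma braidAsc_commute {a c : ℕ} {x : M} (h : ∀ k, c ≤ k → k ≤ a → Commute (g k) x) :
    Commute (braidAsc g c a) x :=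
  Commute.list_prod_left _ _ <| by
    simp only [List.mem_map, List.mem_range]
    rintro _ ⟨m, hm, rfl⟩
    exact h _ (by omega) (by omega)

end Products

section BraidRelations

variable {M : Type*} [Monoid M] {g : ℕ → M} {N : ℕ}
  (hbraid : ∀ k, 1 ≤ k → k + 1 ≤ N → g k * g (k + 1) * g k = g (k + 1) * g k * g (k + 1))
  (hcomm : ∀ i j, 1 ≤ i → 1 ≤ j → i ≤ N → j ≤ N →
    (i + 2 ≤ j ∨ j + 2 ≤ i) → g i * g j = g j * g i)
include hbraid hcomm

lemma gen_mul_braidDesc {j k : ℕ} (hk : 1 ≤ k) (hkj : k < j) (hj : j ≤ N) :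
    g k * braidDesc g j 1 = braidDesc g j 1 * g (k + 1) := by
  induction j with
  | zero => omega
  | succ j ih =>
    rw [braidDesc_succ le_add_self]
    rcases Nat.lt_succ_iff_lt_or_eq.mp hkj with hkj' | rfl
    · rw [← mul_assoc, hcomm k (j + 1) hk (by omega) (by omega) hj (by omega), mul_assoc,
        ih hkj' (by omega), mul_assoc]
    · obtain ⟨m, rfl⟩ : ∃ m, k = m + 1 := ⟨k - 1, by omega⟩
      have hfar : Commute (g (m + 2)) (braidDesc g m 1) :=
        (braidDesc_commute fun l hl hlm =>
          hcomm l (m + 2) hl (by omega) (by omega) hj (by omega)).symm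
      rw [braidDesc_succ (by omega)]
      calc g (m + 1) * (g (m + 2) * (g (m + 1) * braidDesc g m 1))
          = g (m + 2) * g (m + 1) * g (m + 2) * braidDesc g m 1 := by
            rw [← hbraid (m + 1) hk hj]; simp only [mul_assoc]
        _ = g (m + 2) * (g (m + 1) * braidDesc g m 1) * g (m + 2) := by
            simp only [mul_assoc, hfar.eq]

lemma braidAsc_mul_gen {j k : ℕ} (hk : 1 ≤ k) (hkj : k < j) (hj : j ≤ N) :
    braidAsc g 1 j * g k = g (k + 1) * braidAsc g 1 j := by
  -- The braid relations are palindromic, so they hold for `op ∘ g` in `Mᵐᵒᵖ`,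
  -- where `op` turns `U(1,j)` into `D(j,1)`.
  have hbraid_op : ∀ k, 1 ≤ k → k + 1 ≤ N →
      (op ∘ g) k * (op ∘ g) (k + 1) * (op ∘ g) k
        = (op ∘ g) (k + 1) * (op ∘ g) k * (op ∘ g) (k + 1) := fun k h1 h2 => by
    simpa only [Function.comp_apply, op_mul, mul_assoc] using congrArg op (hbraid k h1 h2)
  have hcomm_op : ∀ i j, 1 ≤ i → 1 ≤ j → i ≤ N → j ≤ N → (i + 2 ≤ j ∨ j + 2 ≤ i) →
      (op ∘ g) i * (op ∘ g) j = (op ∘ g) j * (op ∘ g) i := fun i j h1 h2 h3 h4 h5 => by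
    simpa only [Function.comp_apply, op_mul] using congrArg op (hcomm i j h1 h2 h3 h4 h5).symm
  apply op_injective
  rw [op_mul, op_mul, op_braidAsc_one]
  exact gen_mul_braidDesc hbraid_op hcomm_op hk hkj hj

lemma commute_gen_braidC {j k : ℕ} (hk : 1 ≤ k) (hkj : k < j) (hj : j ≤ N) :
    Commute (g k) (braidC g j) := by
  rw [Commute, SemiconjBy, braidC, ← mul_assoc, gen_mul_braidDesc hbraid hcomm hk hkj hj,
    mul_assoc, ← braidAsc_mul_gen hbraid hcomm hk hkj hj, mul_assoc]

lemma commute_braidC_of_lt {i j : ℕ} (hij : i < j) (hj : j ≤ N) :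
    Commute (braidC g i) (braidC g j) :=
  have h : ∀ k, 1 ≤ k → k ≤ i → Commute (g k) (braidC g j) := fun _ hk hki =>
    commute_gen_braidC hbraid hcomm hk (by omega) hj
  (braidDesc_commute h).mul_left (braidAsc_commute h)

end BraidRelations

theorem braidC_commute_general
    {M : Type*} [Monoid M] (N : ℕ) (g : ℕ → M)
    (hbraid : ∀ k, 1 ≤ k → k + 1 ≤ N →
      g k * g (k + 1) * g k = g (k + 1) * g k * g (k + 1))
    (hcomm : ∀ i j, 1 ≤ i → 1 ≤ j → i ≤ N → j ≤ N →
      (i + 2 ≤ j ∨ j + 2 ≤ i) → g i * g j = g j * g i)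
    (i j : ℕ) (hiN : i ≤ N) (hjN : j ≤ N) :
    braidC g i * braidC g j = braidC g j * braidC g i := by
  rcases lt_trichotomy i j with h | rfl | h
  · exact (commute_braidC_of_lt hbraid hcomm h hjN).eq
  · rfl
  · exact (commute_braidC_of_lt hbraid hcomm h hiN).eq.symm

/-- Let `M` be a monoid, `N ≥ 1`, and let `g 1, …, g N` satisfy the
type-A braid relations.  With `c_i := (g_i g_{i−1} ⋯ g_1)(g_1 g_2 ⋯ g_i)`, one has
`c_i c_j = c_j c_i` for all `1 ≤ i, j ≤ N`. -/
theorem braidC_commute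
    {M : Type*} [Monoid M] (N : ℕ) (hN : 1 ≤ N) (g : ℕ → M)
    (hbraid : ∀ k, 1 ≤ k → k + 1 ≤ N →
      g k * g (k + 1) * g k = g (k + 1) * g k * g (k + 1))
    (hcomm : ∀ i j, 1 ≤ i → 1 ≤ j → i ≤ N → j ≤ N →
      (i + 2 ≤ j ∨ j + 2 ≤ i) → g i * g j = g j * g i)
    (i j : ℕ) (hi1 : 1 ≤ i) (hiN : i ≤ N) (hj1 : 1 ≤ j) (hjN : j ≤ N) :
    braidC g i * braidC g j = braidC g j * braidC g i :=
  braidC_commute_general N g hbraid hcomm i j hiN hjN
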